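/- Let R = k[[x,y]]/(y²) for a field k, n ∈ ℕ, and let φₙ be the 2×2 matrix with rows (0,0) and (xⁿ,0) over R. Then the cokernel of y·id₂ − φₙ is isomorphic as an R-module to the ideal (xⁿ, y) of R. -/

import Mathlib

/-- The ring `R = k⟦x,y⟧/(y²)`. -/
noncomputable abbrev Ainf (k : Type*) [Field k] : Type _ :=
  MvPowerSeries (Fin 2) k ⧸
    Ideal.span {(MvPowerSeries.X 1 : MvPowerSeries (Fin 2) k) ^ 2}

/-- The image of `x` in `R = k⟦x,y⟧/(y²)`. -/
noncomputable def xA (k : Type*) [Field k] : Ainf k :=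
  Ideal.Quotient.mk _ (MvPowerSeries.X 0 : MvPowerSeries (Fin 2) k)

/-- The image of `y` in `R = k⟦x,y⟧/(y²)`. -/
noncomputable def yA (k : Type*) [Field k] : Ainf k :=
  Ideal.Quotient.mk _ (MvPowerSeries.X 1 : MvPowerSeries (Fin 2) k)

open MvPowerSeries

lemma eq_single_of_apply_one_eq_zero (m : Fin 2 →₀ ℕ) (h : m 1 = 0) :
    m = Finsupp.single 0 (m 0) := by
  ext i
  fin_cases i
  · simp
  · simpa [Finsupp.single_apply] using h

lemma Y_prime (k : Type*) [Field k] :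
    Prime (MvPowerSeries.X 1 : MvPowerSeries (Fin 2) k) := by
  classical
  refine ⟨?_, ?_, ?_⟩
  · intro h
    have := congrArg (coeff (Finsupp.single 1 1)) h
    rw [coeff_X, if_pos rfl] at this
    simpa using this
  · intro h
    have := isUnit_constantCoeff _ h
    rw [constantCoeff_X] at this
    exact not_isUnit_zero this
  · intro a b hab
    by_contra hcon
    push_neg at hcon
    obtain ⟨ha, hb⟩ := hcon
    rw [X_dvd_iff] at ha hb hab
    push_neg at ha hb
    obtain ⟨ma, hma1, hma⟩ := ha
    obtain ⟨mb, hmb1, hmb⟩ := hb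
    have hea : ∃ j : ℕ, coeff (Finsupp.single 0 j) a ≠ 0 :=
      ⟨ma 0, by rwa [← eq_single_of_apply_one_eq_zero ma hma1]⟩
    have heb : ∃ j : ℕ, coeff (Finsupp.single 0 j) b ≠ 0 :=
      ⟨mb 0, by rwa [← eq_single_of_apply_one_eq_zero mb hmb1]⟩
    set i := Nat.find hea with hi
    set j := Nat.find heb with hj
    have hkey : coeff (Finsupp.single 0 (i + j)) (a * b) = 0 := by
      apply hab
      simp [Finsupp.single_apply]
    rw [coeff_mul] at hkey
    rw [Finset.sum_eq_single (Finsupp.single 0 i, Finsupp.single 0 j)] at hkey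
    · exact mul_ne_zero (Nat.find_spec hea) (Nat.find_spec heb) hkey
    · rintro ⟨p, q⟩ hmem hne
      rw [Finset.HasAntidiagonal.mem_antidiagonal] at hmem
      have hpq1 : p 1 + q 1 = 0 := by
        have h := congrArg (fun f => f 1) hmem
        simpa [Finsupp.single_apply, Fin.ext_iff] using h
      have hp1 : p 1 = 0 := by omega
      have hq1 : q 1 = 0 := by omega
      have hpq : p 0 + q 0 = i + j := by
        have := congrArg (fun f => f 0) hmem
        simpa using this
      have hp := eq_single_of_apply_one_eq_zero p hp1
      have hq := eq_single_of_apply_one_eq_zero q hq1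
      rcases lt_or_ge (p 0) i with h0 | h0
      · have : coeff p a = 0 := by
          rw [hp]
          by_contra hcc
          exact Nat.find_min hea h0 hcc
        simp [this]
      · rcases eq_or_lt_of_le h0 with h0' | h0'
        · exfalso
          apply hne
          have : q 0 = j := by omega
          rw [Prod.mk.injEq]
          constructor
          · rw [hp, h0']
          · rw [hq, this]
        · have hq0 : q 0 < j := by omega
          have : coeff q b = 0 := by
            rw [hq]
            by_contra hcc
            exact Nat.find_min heb hq0 hcc
          simp [this]
    · intro hnm
      exfalso
      apply hnm
      rw [Finset.HasAntidiagonal.mem_antidiagonal]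
      ext t
      fin_cases t <;> simp [Finsupp.single_apply]

lemma yA_sq (k : Type*) [Field k] : (yA k) ^ 2 = 0 := by
  rw [yA, ← map_pow, Ideal.Quotient.eq_zero_iff_mem]
  exact Ideal.subset_span rfl

set_option maxHeartbeats 1000000 in
/-- Let `R = k⟦x,y⟧/(y²)`, `n ∈ ℕ`, and `φₙ = !![0, 0; xⁿ, 0]` over `R`.
Then the cokernel of `y·id₂ - φₙ` is isomorphic as an `R`-module to the ideal `(xⁿ, y)`. -/
theorem coker_iso_ideal_xn_y
    (k : Type*) [Field k] (n : ℕ) :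
    Nonempty
      (((Fin 2 → Ainf k) ⧸ LinearMap.range (Matrix.mulVecLin
          (yA k • (1 : Matrix (Fin 2) (Fin 2) (Ainf k)) - !![0, 0; (xA k) ^ n, 0])))
        ≃ₗ[Ainf k] (Ideal.span {(xA k) ^ n, yA k} : Ideal (Ainf k))) := by
  classical
  set R := Ainf k
  set x := xA k
  set y := yA k
  set M : (Fin 2 → R) →ₗ[R] (Fin 2 → R) := Matrix.mulVecLin
      (yA k • (1 : Matrix (Fin 2) (Fin 2) (Ainf k)) - !![0, 0; (xA k) ^ n, 0]) with hM
  have hMapp : ∀ v : Fin 2 → R, M v = ![y * v 0, -(x ^ n * v 0) + y * v 1] := by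
    intro v
    funext i
    fin_cases i <;>
      simp [hM, Matrix.mulVecLin_apply, Matrix.mulVec, dotProduct,
        Fin.sum_univ_two, Matrix.smul_apply, Matrix.one_apply, mul_comm] <;> ring
  set ψ : (Fin 2 → R) →ₗ[R] R :=
    (LinearMap.proj 0).smulRight (x ^ n) + (LinearMap.proj 1).smulRight y with hψ
  have hψapp : ∀ v : Fin 2 → R, ψ v = v 0 * x ^ n + v 1 * y := by
    intro v; simp [hψ, smul_eq_mul]
  have hrange : LinearMap.range ψ = (Ideal.span {x ^ n, y} : Ideal R) := by
    apply le_antisymm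
    · rintro _ ⟨v, rfl⟩
      rw [hψapp]
      exact Submodule.add_mem _
        (Ideal.mul_mem_left _ _ (Ideal.subset_span (by simp)))
        (Ideal.mul_mem_left _ _ (Ideal.subset_span (by simp)))
    · rw [Ideal.span_le]
      rintro t ht
      rcases ht with h | h
      · exact ⟨![1, 0], by rw [hψapp]; simp [h]⟩
      · exact ⟨![0, 1], by rw [hψapp]; simp [Set.mem_singleton_iff.mp h]⟩
  have hker : LinearMap.range M = LinearMap.ker ψ := by
    apply le_antisymm
    · rintro _ ⟨v, rfl⟩
      rw [LinearMap.mem_ker, hψapp, hMapp]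
      have h2 : y * y = 0 := by rw [← sq]; exact yA_sq k
      simp only [Matrix.cons_val_zero, Matrix.cons_val_one, Matrix.head_cons]
      ring_nf
      rw [mul_comm y y] at h2
      change @Eq (Ainf k) _ _
      linear_combination v 1 * h2
    · intro v hv
      rw [LinearMap.mem_ker, hψapp] at hv
      obtain ⟨A, hA⟩ := Ideal.Quotient.mk_surjective (v 0)
      obtain ⟨B, hB⟩ := Ideal.Quotient.mk_surjective (v 1)
      have hmem : A * (MvPowerSeries.X 0) ^ n + B * MvPowerSeries.X 1 ∈
          Ideal.span {(MvPowerSeries.X 1 : MvPowerSeries (Fin 2) k) ^ 2} := by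
        rw [← Ideal.Quotient.eq_zero_iff_mem]
        push_cast [map_add, map_mul, map_pow]
        rw [hA, hB]
        exact hv
      rw [Ideal.mem_span_singleton] at hmem
      obtain ⟨C, hC⟩ := hmem
      have hdvd : (MvPowerSeries.X 1 : MvPowerSeries (Fin 2) k) ∣ A * (MvPowerSeries.X 0) ^ n :=
        ⟨MvPowerSeries.X 1 * C - B, by linear_combination hC⟩
      have hnd : ¬ (MvPowerSeries.X 1 : MvPowerSeries (Fin 2) k) ∣ (MvPowerSeries.X 0) ^ n := by
        intro h
        have := (Y_prime k).dvd_of_dvd_pow h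
        rw [MvPowerSeries.X_dvd_iff] at this
        have h1 := this (Finsupp.single 0 1) (by simp [Finsupp.single_apply, Fin.ext_iff])
        rw [MvPowerSeries.coeff_X, if_pos rfl] at h1
        exact one_ne_zero h1
      obtain ⟨U, hU⟩ := ((Y_prime k).2.2 _ _ hdvd).resolve_right hnd
      have hB' : B = MvPowerSeries.X 1 * C - U * (MvPowerSeries.X 0) ^ n := by
        have hX : (MvPowerSeries.X 1 : MvPowerSeries (Fin 2) k) ≠ 0 := (Y_prime k).1
        have : MvPowerSeries.X 1 *
            (B - (MvPowerSeries.X 1 * C - U * (MvPowerSeries.X 0) ^ n)) = 0 := by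
          linear_combination hC - MvPowerSeries.X 0 ^ n * hU
        rcases mul_eq_zero.mp this with h | h
        · exact absurd h hX
        · exact sub_eq_zero.mp h
      refine ⟨![Ideal.Quotient.mk _ U, Ideal.Quotient.mk _ C], ?_⟩
      rw [hMapp]
      funext i
      fin_cases i
      · show y * Ideal.Quotient.mk _ U = v 0
        rw [← hA, hU, map_mul]; rfl
      · show -(x ^ n * Ideal.Quotient.mk _ U) + y * Ideal.Quotient.mk _ C = v 1
        rw [← hB, hB']
        push_cast [map_sub, map_mul, map_pow]
        show _ = yA k * _ - _ * xA k ^ n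
        ring
  exact ⟨(Submodule.quotEquivOfEq _ _ hker).trans
    (ψ.quotKerEquivRange.trans (LinearEquiv.ofEq _ _ hrange))⟩
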